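/- Let L = Σ_{i=0}^J a_i(n)σ^i (a_i ∈ K[n]) annihilate the sequence F : ℕ → K over a field K of characteristic 0. Then for every x(n) ∈ K[n] and every n ∈ ℕ, L*(x)(n)·F(n) = Σ_{i=0}^{J−1} u_i(n)F(n+i) − Σ_{i=0}^{J−1} u_i(n+1)F(n+1+i), where u_i(n) = Σ_{j=1}^{J−i} a_{i+j}(n−j)·x(n−j) ∈ K[n]. In particular L*(x)(n)·F(n) is summable for every polynomial x. -/

import Mathlib

open Polynomial Finset

/-- The polynomials `b_k(n) = ∑_{j=k}^J binom(j,k) a_{J-j}(n+j-J)` attached to the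
operator `L = ∑_{i=0}^J a_i(n) σ^i`. -/
noncomputable def bPoly {K : Type*} [Field K] (J : ℕ) (a : ℕ → K[X]) (k : ℕ) : K[X] :=
  ∑ j ∈ Finset.Icc k J, (j.choose k : K) • (a (J - j)).comp (X + C ((j : K) - (J : K)))

/-- The degree of the operator `L = ∑_{i=0}^J a_i(n) σ^i`:
`deg L = max_{0 ≤ k ≤ J} (deg b_k(n) - k)`, an element of `WithBot ℤ`
(the zero polynomial having degree `⊥ = -∞`). -/
noncomputable def opDegree {K : Type*} [Field K] (J : ℕ) (a : ℕ → K[X]) : WithBot ℤ :=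
  (Finset.range (J + 1)).sup fun k =>
    WithBot.map (fun d : ℕ => (d : ℤ) - (k : ℤ)) (bPoly J a k).degree

/-- The adjoint `L*` applied to a polynomial `x`:
`L*(x)(n) = ∑_{i=0}^J a_i(n-i) x(n-i)`. -/
noncomputable def adjointApply {K : Type*} [Field K] (J : ℕ) (a : ℕ → K[X]) (x : K[X]) : K[X] :=
  ∑ i ∈ Finset.range (J + 1), ((a i).comp (X - C (i : K))) * (x.comp (X - C (i : K)))

/-- The continued zero index `C_L`: the least `c ∈ ℕ` with `L*(n^c) ≠ 0`. -/
noncomputable def contZeroIndex {K : Type*} [Field K] (J : ℕ) (a : ℕ → K[X]) : ℕ :=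
  sInf {c : ℕ | adjointApply J a (X ^ c) ≠ 0}

/-- The operator `L = ∑_{i=0}^J a_i(n) σ^i` annihilates the sequence `F` if
`∑_{i=0}^J a_i(n) F(n+i) = 0` for all `n ∈ ℕ`. -/
def Annihilates {K : Type*} [Field K] (J : ℕ) (a : ℕ → K[X]) (F : ℕ → K) : Prop :=
  ∀ n : ℕ, ∑ i ∈ Finset.range (J + 1), (a i).eval (n : K) * F (n + i) = 0

/-- `F` is holonomic: it admits a nonzero annihilating operator. -/
def Holonomic {K : Type*} [Field K] (F : ℕ → K) : Prop :=
  ∃ (J : ℕ) (a : ℕ → K[X]), (∃ i ≤ J, a i ≠ 0) ∧ Annihilates J a F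

/-- `F` has order `J`: `J` is the minimal order of a nonzero annihilator of `F`. -/
def HasOrder {K : Type*} [Field K] (F : ℕ → K) (J : ℕ) : Prop :=
  (∃ a : ℕ → K[X], (∃ i ≤ J, a i ≠ 0) ∧ Annihilates J a F) ∧
    ∀ J' < J, ∀ a : ℕ → K[X], (∃ i ≤ J', a i ≠ 0) → ¬ Annihilates J' a F

/-- `(num(n)/den(n))·F(n)` is summable: there are rational functions
`u_i = u i / v i`, `0 ≤ i ≤ J-1`, such that
`num(n)/den(n) · F(n) = ∑_i u_i(n+1) F(n+1+i) - ∑_i u_i(n) F(n+i)`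
for all `n` at which all rational functions involved are defined. -/
def IsSummableRat {K : Type*} [Field K] (J : ℕ) (F : ℕ → K) (num den : K[X]) : Prop :=
  ∃ u v : ℕ → K[X], (∀ i < J, v i ≠ 0) ∧ ∀ n : ℕ,
    den.eval (n : K) ≠ 0 →
    (∀ i < J, (v i).eval (n : K) ≠ 0 ∧ (v i).eval ((n : K) + 1) ≠ 0) →
    num.eval (n : K) / den.eval (n : K) * F n =
      (∑ i ∈ Finset.range J,
          (u i).eval ((n : K) + 1) / (v i).eval ((n : K) + 1) * F (n + 1 + i)) -
        ∑ i ∈ Finset.range J, (u i).eval (n : K) / (v i).eval (n : K) * F (n + i)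

/-- The coefficient of `n^m` in a polynomial, for an integer index `m`
(zero for negative `m`). -/
noncomputable def coeffZ {K : Type*} [Field K] (b : K[X]) (m : ℤ) : K :=
  if 0 ≤ m then b.coeff m.toNat else 0

/-- The value `f(s) = ∑_{k=0}^J [n^{d+k}](b_k(n)) · s(s-1)⋯(s-k+1)`, where `d = deg L`. -/
noncomputable def fVal {K : Type*} [Field K] (J : ℕ) (a : ℕ → K[X]) (s : ℕ) : K :=
  ∑ k ∈ Finset.range (J + 1),
    coeffZ (bPoly J a k) ((opDegree J a).unbotD 0 + (k : ℤ)) *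
      ∏ j ∈ Finset.range k, ((s : K) - (j : K))

/-- `L` is nondegenerated if `f(s)` has no root in `ℕ`. -/
def Nondegenerated {K : Type*} [Field K] (J : ℕ) (a : ℕ → K[X]) : Prop :=
  ∀ s : ℕ, fVal J a s ≠ 0

/-- `d_L = max_{0 ≤ i ≤ J} deg a_i(n)`. -/
noncomputable def dLdeg {K : Type*} [Field K] (J : ℕ) (a : ℕ → K[X]) : ℕ :=
  (Finset.range (J + 1)).sup fun i => (a i).natDegree


/-
Put `G i j = a_{i+j}(n-j) x(n-j) F(n+i)` on the triangle `i + j ≤ J`. Its row `i = 0` sums to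
`L*(x)(n) F(n)` and its column `j = 0` to `x(n) · (L F)(n) = 0`. Removing the column leaves the
terms `u_i(n) F(n+i)`, removing the row leaves the terms `u_i(n+1) F(n+1+i)` (shift `i ↦ i+1`,
`j ↦ j-1`), so the difference of the two is `L*(x)(n) F(n)`.
-/
lemma sum_Icc_one_eq_sum_range {M : Type*} [AddCommMonoid M] (m : ℕ) (f : ℕ → M) :
    ∑ j ∈ Icc 1 m, f j = ∑ j ∈ range m, f (j + 1) := by
  rw [← Ico_add_one_right_eq_Icc, sum_Ico_eq_sum_range]
  simp only [add_tsub_cancel_right, add_comm 1]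

lemma sum_range_succ_eq_add_sum_Icc_one {M : Type*} [AddCommMonoid M] (m : ℕ) (f : ℕ → M) :
    ∑ j ∈ range (m + 1), f j = f 0 + ∑ j ∈ Icc 1 m, f j := by
  rw [sum_range_succ', sum_Icc_one_eq_sum_range, add_comm]

lemma sum_triangle_row_zero {M : Type*} [AddCommGroup M] (J : ℕ) (G : ℕ → ℕ → M) :
    ∑ j ∈ range (J + 1), G 0 j =
      ∑ i ∈ range (J + 1), G i 0 +
        (∑ i ∈ range J, ∑ j ∈ Icc 1 (J - i), G i j -
          ∑ i ∈ range J, ∑ j ∈ range (J - i), G (i + 1) j) := by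
  let T := ∑ i ∈ range (J + 1), ∑ j ∈ range (J - i + 1), G i j
  have by_column :
      T = ∑ i ∈ range (J + 1), G i 0 + ∑ i ∈ range J, ∑ j ∈ Icc 1 (J - i), G i j := by
    simp only [T, sum_range_succ_eq_add_sum_Icc_one, sum_add_distrib, sum_range_succ _ J,
      tsub_self, Icc_eq_empty_of_lt zero_lt_one, sum_empty, add_zero]
    abel
  have by_row :
      T = ∑ j ∈ range (J + 1), G 0 j + ∑ i ∈ range J, ∑ j ∈ range (J - i), G (i + 1) j := by
    rw [show T = _ from sum_range_succ' (fun i => ∑ j ∈ range (J - i + 1), G i j) J, add_comm,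
      tsub_zero]
    congr 1
    refine sum_congr rfl fun i hi => ?_
    rw [show J - (i + 1) + 1 = J - i by have := mem_range.mp hi; omega]
  rw [← sub_eq_iff_eq_add'.mpr by_row, by_column]
  abel

noncomputable def adjointCertificate {K : Type*} [Field K] (J : ℕ) (a : ℕ → K[X]) (x : K[X])
    (i : ℕ) : K[X] :=
  ∑ j ∈ Icc 1 (J - i), (a (i + j)).comp (X - C (j : K)) * x.comp (X - C (j : K))

lemma eval_adjointCertificate {K : Type*} [Field K] (J : ℕ) (a : ℕ → K[X]) (x : K[X]) (i : ℕ)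
    (y : K) :
    (adjointCertificate J a x i).eval y =
      ∑ j ∈ Icc 1 (J - i), (a (i + j)).eval (y - j) * x.eval (y - j) := by
  simp only [adjointCertificate, eval_finsetSum, eval_mul, eval_comp, eval_sub, eval_X, eval_C]

lemma adjointApply_eval_mul_eq_sub {K : Type*} [Field K] (F : ℕ → K) (J : ℕ) (a : ℕ → K[X])
    (hann : Annihilates J a F) (x : K[X]) (n : ℕ) :
    (adjointApply J a x).eval (n : K) * F n =
      ∑ i ∈ range J, (adjointCertificate J a x i).eval (n : K) * F (n + i) -
        ∑ i ∈ range J, (adjointCertificate J a x i).eval ((n : K) + 1) * F (n + 1 + i) := by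
  let G : ℕ → ℕ → K := fun i j =>
    (a (i + j)).eval ((n : K) - j) * x.eval ((n : K) - j) * F (n + i)
  have row_zero : ∑ j ∈ range (J + 1), G 0 j = (adjointApply J a x).eval (n : K) * F n := by
    simp only [G, adjointApply, eval_finsetSum, eval_mul, eval_comp, eval_sub, eval_X, eval_C,
      sum_mul, zero_add, add_zero]
  have column_zero : ∑ i ∈ range (J + 1), G i 0 = 0 :=
    calc ∑ i ∈ range (J + 1), G i 0
        = x.eval (n : K) * ∑ i ∈ range (J + 1), (a i).eval (n : K) * F (n + i) := by
          rw [mul_sum]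
          refine sum_congr rfl fun i _ => ?_
          simp only [G, add_zero, Nat.cast_zero, sub_zero]
          ring
      _ = 0 := by rw [hann n, mul_zero]
  have first_sum (i : ℕ) : (adjointCertificate J a x i).eval (n : K) * F (n + i) =
      ∑ j ∈ Icc 1 (J - i), G i j := by
    rw [eval_adjointCertificate, sum_mul]
  have second_sum (i : ℕ) :
      (adjointCertificate J a x i).eval ((n : K) + 1) * F (n + 1 + i) =
        ∑ j ∈ range (J - i), G (i + 1) j := by
    rw [eval_adjointCertificate, sum_mul, sum_Icc_one_eq_sum_range]
    refine sum_congr rfl fun j _ => ?_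
    rw [Nat.cast_add_one, add_sub_add_right_eq_sub, ← add_assoc, add_right_comm i,
      add_assoc n, add_comm 1 i]
  rw [← row_zero, sum_triangle_row_zero, column_zero, zero_add]
  simp only [first_sum, second_sum]

theorem adjoint_mul_summable_general {K : Type*} [Field K]
    (F : ℕ → K) (J : ℕ) (a : ℕ → K[X]) (hann : Annihilates J a F) (x : K[X]) :
    (∀ n : ℕ,
      (adjointApply J a x).eval (n : K) * F n =
        (∑ i ∈ Finset.range J,
            (∑ j ∈ Finset.Icc 1 (J - i),
              (a (i + j)).eval ((n : K) - (j : K)) * x.eval ((n : K) - (j : K))) * F (n + i)) -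
          ∑ i ∈ Finset.range J,
            (∑ j ∈ Finset.Icc 1 (J - i),
              (a (i + j)).eval (((n : K) + 1) - (j : K)) * x.eval (((n : K) + 1) - (j : K))) *
              F (n + 1 + i)) ∧
      IsSummableRat J F (adjointApply J a x) 1 := by
  have key := adjointApply_eval_mul_eq_sub F J a hann x
  refine ⟨fun n => by simpa only [eval_adjointCertificate] using key n, ?_⟩
  -- `IsSummableRat` has the opposite sign convention, hence the certificate `-u_i / 1`.
  refine ⟨fun i => -adjointCertificate J a x i, fun _ => 1, fun _ _ => one_ne_zero,
    fun n _ _ => ?_⟩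
  simp only [eval_one, div_one, eval_neg, neg_mul, sum_neg_distrib]
  linear_combination key n

/-- If `L = ∑_{i=0}^J a_i(n) σ^i` annihilates `F`, then for every polynomial
`x` and every `n ∈ ℕ`,
`L*(x)(n)·F(n) = ∑_{i=0}^{J-1} u_i(n)F(n+i) - ∑_{i=0}^{J-1} u_i(n+1)F(n+1+i)`, where
`u_i(n) = ∑_{j=1}^{J-i} a_{i+j}(n-j)·x(n-j)`.  In particular `L*(x)(n)·F(n)` is summable. -/
theorem adjoint_mul_summable {K : Type*} [Field K] [CharZero K]
    (F : ℕ → K) (J : ℕ) (a : ℕ → K[X]) (hann : Annihilates J a F) (x : K[X]) :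
    (∀ n : ℕ,
      (adjointApply J a x).eval (n : K) * F n =
        (∑ i ∈ Finset.range J,
            (∑ j ∈ Finset.Icc 1 (J - i),
              (a (i + j)).eval ((n : K) - (j : K)) * x.eval ((n : K) - (j : K))) * F (n + i)) -
          ∑ i ∈ Finset.range J,
            (∑ j ∈ Finset.Icc 1 (J - i),
              (a (i + j)).eval (((n : K) + 1) - (j : K)) * x.eval (((n : K) + 1) - (j : K))) *
              F (n + 1 + i)) ∧
      IsSummableRat J F (adjointApply J a x) 1 :=
  adjoint_mul_summable_general F J a hann x
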